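/- For any integer g ≥ 2, the polynomial IE(M_B(C, PGL_2); q) := (q^{2g-2}+1)(q^2-1)^{2g-2} + (1/2) q^{2g-3}(q^2+q+1)(q+1)^{2g-2} - (1/2) q^{2g-3}(q^2-q+1)(q-1)^{2g-2} is palindromic of degree 6g-6; that is, q^{6g-6} · IE(1/q) = IE(q). -/

import Mathlib

/-- The intersection E-polynomial of the PGL₂ character variety, as a function of q. -/
def IEPGL2 (g : ℕ) (q : ℚ) : ℚ :=
  (q ^ (2 * g - 2) + 1) * (q ^ 2 - 1) ^ (2 * g - 2) +
    (1 / 2) * q ^ (2 * g - 3) * (q ^ 2 + q + 1) * (q + 1) ^ (2 * g - 2) -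
    (1 / 2) * q ^ (2 * g - 3) * (q ^ 2 - q + 1) * (q - 1) ^ (2 * g - 2)

/-!
With `n = 2g - 2` (even), each of the three summands of `IE` is separately palindromic of
degree `3n = 6g - 6`: it is a product of factors `f` with `q ^ d * f (1 / q) = ± f q`, namely
`q ^ k`, `q ^ n + 1`, `q ^ 2 ± q + 1`, `q + 1`, `q - 1`, `q ^ 2 - 1`, and the signs of the
antipalindromic factors `q - 1` and `q ^ 2 - 1` cancel because they occur to the even power `n`.
-/

/-- `f` is palindromic of degree `d` (`ε = 1`) or antipalindromic (`ε = -1`). -/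
def IsPalindromic {K : Type*} [Field K] (d : ℕ) (ε : K) (f : K → K) : Prop :=
  ∀ q ≠ 0, q ^ d * f q⁻¹ = ε * f q

namespace IsPalindromic

variable {K : Type*} [Field K] {d e : ℕ} {ε δ : K} {f g : K → K}

theorem add (hf : IsPalindromic d ε f) (hg : IsPalindromic d ε g) :
    IsPalindromic d ε (fun q => f q + g q) := fun q hq => by
  rw [mul_add, hf q hq, hg q hq, mul_add]

theorem sub (hf : IsPalindromic d ε f) (hg : IsPalindromic d ε g) :
    IsPalindromic d ε (fun q => f q - g q) := fun q hq => by
  rw [mul_sub, hf q hq, hg q hq, mul_sub]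

theorem const_mul (hf : IsPalindromic d ε f) (c : K) :
    IsPalindromic d ε (fun q => c * f q) := fun q hq => by
  rw [mul_left_comm, hf q hq, mul_left_comm]

theorem mul (hf : IsPalindromic d ε f) (hg : IsPalindromic e δ g) :
    IsPalindromic (d + e) (ε * δ) (fun q => f q * g q) := fun q hq =>
  calc q ^ (d + e) * (f q⁻¹ * g q⁻¹) = (q ^ d * f q⁻¹) * (q ^ e * g q⁻¹) := by ring
    _ = ε * δ * (f q * g q) := by rw [hf q hq, hg q hq]; ring

theorem pow (hf : IsPalindromic d ε f) (k : ℕ) :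
    IsPalindromic (d * k) (ε ^ k) (fun q => f q ^ k) := fun q hq => by
  rw [pow_mul, ← mul_pow, hf q hq, mul_pow]

end IsPalindromic

section

variable {K : Type*} [Field K]

theorem isPalindromic_pow (k : ℕ) : IsPalindromic (2 * k) (1 : K) (fun q => q ^ k) :=
  fun q hq => by
    beta_reduce
    rw [inv_pow, two_mul, pow_add, mul_inv_cancel_right₀ (pow_ne_zero k hq), one_mul]

theorem isPalindromic_pow_add_one (k : ℕ) :
    IsPalindromic k (1 : K) (fun q => q ^ k + 1) :=
  fun q hq => by
    beta_reduce
    rw [inv_pow, mul_add, mul_inv_cancel₀ (pow_ne_zero k hq), mul_one, one_mul, add_comm]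

theorem isPalindromic_add_one : IsPalindromic 1 (1 : K) (fun q => q + 1) :=
  fun q hq => by beta_reduce; field_simp; ring

theorem isPalindromic_sub_one : IsPalindromic 1 (-1 : K) (fun q => q - 1) :=
  fun q hq => by beta_reduce; field_simp; ring

theorem isPalindromic_sq_sub_one : IsPalindromic 2 (-1 : K) (fun q => q ^ 2 - 1) :=
  fun q hq => by beta_reduce; field_simp; ring

theorem isPalindromic_sq_add_add_one : IsPalindromic 2 (1 : K) (fun q => q ^ 2 + q + 1) :=
  fun q hq => by beta_reduce; field_simp; ring

theorem isPalindromic_sq_sub_add_one : IsPalindromic 2 (1 : K) (fun q => q ^ 2 - q + 1) :=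
  fun q hq => by beta_reduce; field_simp; ring

end

theorem stmt6 (g : ℕ) (hg : 2 ≤ g) (q : ℚ) (hq : q ≠ 0) :
    q ^ (6 * g - 6) * IEPGL2 g (1 / q) = IEPGL2 g q := by
  have hn : Even (2 * g - 2) := ⟨g - 1, by omega⟩
  have hA := (isPalindromic_pow_add_one (K := ℚ) (2 * g - 2)).mul
    (isPalindromic_sq_sub_one.pow (2 * g - 2))
  have hB := (((isPalindromic_pow (2 * g - 3)).const_mul (1 / 2 : ℚ)).mul
    isPalindromic_sq_add_add_one).mul (isPalindromic_add_one.pow (2 * g - 2))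
  have hC := (((isPalindromic_pow (2 * g - 3)).const_mul (1 / 2 : ℚ)).mul
    isPalindromic_sq_sub_add_one).mul (isPalindromic_sub_one.pow (2 * g - 2))
  rw [show 2 * g - 2 + 2 * (2 * g - 2) = 6 * g - 6 by omega] at hA
  rw [show 2 * (2 * g - 3) + 2 + 1 * (2 * g - 2) = 6 * g - 6 by omega] at hB hC
  simp only [hn.neg_one_pow, one_pow, mul_one] at hA hB hC
  have hIE : IsPalindromic (6 * g - 6) (1 : ℚ) (IEPGL2 g) := (hA.add hB).sub hC
  simpa only [one_div, one_mul] using hIE q hq
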